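/- arXiv:2412.20596 — 2 statements merged into one kernel-verified Lean document; each statement's English description precedes it below -/
import Mathlib

section
/- Let η ∈ [0,1], ξ ∈ {-1,1}, and τ_{n-1}, τ_n > 0. Suppose that conditioned on x_0, the random vector x_{τ_n} is distributed as N(x_0, τ_n² I), and that conditioned on (x_{τ_n}, x_0), the vector x_{τ_{n-1}} is distributed as N(x_0 + ξ√(1-η²) τ_{n-1} (x_0 - x_{τ_n})/τ_n, η² τ_{n-1}² I). Then the marginal distribution of x_{τ_{n-1}} conditioned on x_0 is N(x_0, τ_{n-1}² I), independent of η and ξ. -/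
open MeasureTheory ProbabilityTheory Matrix Filter

noncomputable def stdGaussian (d : ℕ) : Measure (EuclideanSpace ℝ (Fin d)) :=
  (Measure.pi fun _ : Fin d => gaussianReal 0 1).map (MeasurableEquiv.toLp 2 (Fin d → ℝ))

noncomputable def gaussianVec {d : ℕ} (μ : EuclideanSpace ℝ (Fin d)) (τ : ℝ) :
    Measure (EuclideanSpace ℝ (Fin d)) :=
  (stdGaussian d).map (fun v => μ + τ • v)

/-!
Write `x_{τ_n} = x₀ + τ_n V` and `x_{τ_{n-1}} = x₀ + c (x₀ - x_{τ_n}) + η τ_{n-1} W` with `V, W`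
independent standard Gaussians and `c = ξ √(1 - η²) τ_{n-1} / τ_n`, so that
`x_{τ_{n-1}} = x₀ + (-c τ_n) V + η τ_{n-1} W`. By the characteristic function, `a V + b W` is a
standard Gaussian scaled by `√(a² + b²)`, and here
`(c τ_n)² + (η τ_{n-1})² = (1 - η²) τ_{n-1}² + η² τ_{n-1}² = τ_{n-1}²` since `ξ² = 1`.
-/

namespace MeasureTheory.Measure

variable {α β γ : Type*} [MeasurableSpace α] [MeasurableSpace β] [MeasurableSpace γ]

theorem bind_map_eq_map_prod (μ : Measure α) (ν : Measure β) [SFinite μ] [SFinite ν]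
    {g : α × β → γ} (hg : Measurable g) :
    μ.bind (fun x => ν.map fun y => g (x, y)) = (μ.prod ν).map g := by
  have hκ : (fun x => ν.map fun y => g (x, y)) = ⇑((Kernel.id ×ₖ Kernel.const α ν).map g) := by
    funext x
    rw [Kernel.map_apply _ hg, Kernel.prod_apply, Kernel.id_apply, Kernel.const_apply,
      dirac_prod, map_map hg measurable_prodMk_left]
    rfl
  rw [hκ, ← map_comp _ _ hg, ← compProd_eq_comp_prod, compProd_const]

end MeasureTheory.Measure

namespace ProbabilityTheory

variable {E : Type*} [NormedAddCommGroup E] [InnerProductSpace ℝ E] [FiniteDimensional ℝ E]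
  [MeasurableSpace E] [BorelSpace E]

theorem stdGaussian_prod_map_smul_add_smul (a b : ℝ) :
    ((stdGaussian E).prod (stdGaussian E)).map (fun p => a • p.1 + b • p.2)
      = (stdGaussian E).map (fun x => √(a ^ 2 + b ^ 2) • x) := by
  have hconv : ((stdGaussian E).prod (stdGaussian E)).map (fun p => a • p.1 + b • p.2)
      = (stdGaussian E).map (a • ·) ∗ (stdGaussian E).map (b • ·) := by
    rw [Measure.conv, Measure.map_prod_map _ _ (by fun_prop) (by fun_prop),
      Measure.map_map (by fun_prop) (by fun_prop)]
    rfl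
  refine Measure.ext_of_charFun (funext fun t => ?_)
  have hnorm : ‖a • t‖ ^ 2 + ‖b • t‖ ^ 2 = ‖√(a ^ 2 + b ^ 2) • t‖ ^ 2 := by
    simp only [norm_smul, mul_pow, Real.norm_eq_abs, sq_abs,
      Real.sq_sqrt (by positivity : 0 ≤ a ^ 2 + b ^ 2)]
    ring
  rw [hconv, charFun_conv, charFun_map_smul, charFun_map_smul, charFun_map_smul,
    charFun_stdGaussian, charFun_stdGaussian, charFun_stdGaussian, ← Complex.exp_add,
    ← Complex.ofReal_pow, ← Complex.ofReal_pow, ← Complex.ofReal_pow, ← hnorm]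
  congr 1
  push_cast
  ring

end ProbabilityTheory

theorem stdGaussian_eq_stdGaussian_euclideanSpace (d : ℕ) :
    _root_.stdGaussian d = ProbabilityTheory.stdGaussian (EuclideanSpace ℝ (Fin d)) :=
  map_pi_eq_stdGaussian

theorem gaussianVec_bind_gaussianVec {d : ℕ} (μ y : EuclideanSpace ℝ (Fin d)) (τ c σ : ℝ) :
    (gaussianVec μ τ).bind (fun x => gaussianVec (y + c • (μ - x)) σ)
      = gaussianVec y √((c * τ) ^ 2 + σ ^ 2) := by
  set ν := ProbabilityTheory.stdGaussian (EuclideanSpace ℝ (Fin d))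
  have hν : _root_.stdGaussian d = ν := stdGaussian_eq_stdGaussian_euclideanSpace d
  calc (gaussianVec μ τ).bind (fun x => gaussianVec (y + c • (μ - x)) σ)
      = ((ν.map (μ + τ • ·)).prod ν).map (fun p => y + c • (μ - p.1) + σ • p.2) := by
        simp only [gaussianVec, hν]
        exact Measure.bind_map_eq_map_prod _ ν
          (g := fun p => y + c • (μ - p.1) + σ • p.2) (by fun_prop)
    _ = ((ν.prod ν).map (fun p => -(c * τ) • p.1 + σ • p.2)).map (y + ·) := by
        have hprod : (ν.map (μ + τ • ·)).prod ν = (ν.prod ν).map (Prod.map (μ + τ • ·) id) := by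
          simpa only [Measure.map_id] using Measure.map_prod_map ν ν (by fun_prop) measurable_id
        rw [hprod, Measure.map_map (by fun_prop) (by fun_prop),
          Measure.map_map (by fun_prop) (by fun_prop)]
        congr 1
        funext p
        simp only [Function.comp_apply, Prod.map_fst, Prod.map_snd, id]
        module
    _ = gaussianVec y √((c * τ) ^ 2 + σ ^ 2) := by
        rw [stdGaussian_prod_map_smul_add_smul, Measure.map_map (by fun_prop) (by fun_prop),
          gaussianVec, hν, neg_sq]
        rfl

/-- Proposition 1: one-step marginal preservation for the sign-flipped DDIM noise injection. -/
theorem ddim_flip_marginal (d : ℕ) (η ξ τn τn1 : ℝ)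
    (hη : η ∈ Set.Icc (0:ℝ) 1) (hξ : ξ = 1 ∨ ξ = -1)
    (hτn : 0 < τn) (hτn1 : 0 < τn1)
    {Ω : Type*} [MeasurableSpace Ω] (P : Measure Ω) [IsProbabilityMeasure P]
    (x0 : EuclideanSpace ℝ (Fin d))
    (Xn Xn1 : Ω → EuclideanSpace ℝ (Fin d))
    (hXn : Measurable Xn) (hXn1 : Measurable Xn1)
    (hXnlaw : P.map Xn = gaussianVec x0 τn)
    (hcond : ∀ᵐ xn ∂(P.map Xn),
      condDistrib Xn1 Xn P xn
        = gaussianVec (x0 + (ξ * Real.sqrt (1 - η^2) * τn1 / τn) • (x0 - xn)) (η * τn1)) :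
    P.map Xn1 = gaussianVec x0 τn1 := by
  have hξ_sq : ξ ^ 2 = 1 := by rcases hξ with rfl | rfl <;> norm_num
  have hvar : (ξ * √(1 - η ^ 2) * τn1 / τn * τn) ^ 2 + (η * τn1) ^ 2 = τn1 ^ 2 := by
    rw [div_mul_cancel₀ _ hτn.ne', mul_pow, mul_pow, hξ_sq,
      Real.sq_sqrt (by nlinarith [hη.1, hη.2])]
    ring
  calc P.map Xn1 = (P.map Xn).bind (condDistrib Xn1 Xn P) :=
        (condDistrib_comp_map hXn.aemeasurable hXn1.aemeasurable).symm
    _ = (gaussianVec x0 τn).bind fun xn =>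
          gaussianVec (x0 + (ξ * √(1 - η ^ 2) * τn1 / τn) • (x0 - xn)) (η * τn1) := by
        rw [Measure.bind_congr_right hcond, hXnlaw]
    _ = gaussianVec x0 τn1 := by
        rw [gaussianVec_bind_gaussianVec, hvar, Real.sqrt_sq hτn1.le]
end

section
/- Let T = τ_N > τ_{N-1} > ... > τ_1 > 0 and suppose for each n the conditional law of x_{τ_{n-1}} given (x_{τ_n}, x_0) is N(x_0 + ξ√(1-η²) τ_{n-1}(x_0 - x_{τ_n})/τ_n, η²τ_{n-1}² I) and x_{τ_N} | x_0 ~ N(x_0, τ_N² I). Then by induction, for every n ∈ {1,...,N}, x_{τ_n} | x_0 ~ N(x_0, τ_n² I). -/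
/-! If `x ~ N(x₀, τ² I)` and, given `x`, `y ~ N(x₀ + c (x₀ - x), σ² I)`, then `y` is the sum of the
independent Gaussians `x₀ - c (x - x₀)` and `σ Z`, so `y ~ N(x₀, (c² τ² + σ²) I)`; Gaussian
convolutions are computed through characteristic functions. With the DDIM coefficients
`c τₙ = ξ √(1 - η²) τₙ₋₁` and `σ = η τₙ₋₁` the variance is `τₙ₋₁²`, and a downward induction from
`n = N` propagates the marginals along the chain. -/

open MeasureTheory ProbabilityTheory Matrix Filter

instance (d : ℕ) : IsProbabilityMeasure (stdGaussian d) :=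
  Measure.isProbabilityMeasure_map (by fun_prop)

instance {d : ℕ} (μ : EuclideanSpace ℝ (Fin d)) (τ : ℝ) :
    IsProbabilityMeasure (gaussianVec μ τ) :=
  Measure.isProbabilityMeasure_map (by fun_prop)

open Complex in
lemma charFun_gaussianVec {d : ℕ} (μ t : EuclideanSpace ℝ (Fin d)) (τ : ℝ) :
    charFun (gaussianVec μ τ) t = cexp (inner ℝ μ t * I - ((τ ^ 2 * ‖t‖ ^ 2 / 2 : ℝ) : ℂ)) := by
  have hstd : _root_.stdGaussian d = ProbabilityTheory.stdGaussian _ := map_pi_eq_stdGaussian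
  have hcomp : (fun v => μ + τ • v) = (· + μ) ∘ (τ • ·) := by
    funext v; exact add_comm _ _
  rw [gaussianVec, hcomp, ← Measure.map_map (by fun_prop) (by fun_prop), charFun_map_add_const,
    charFun_map_smul, hstd, charFun_stdGaussian, ← Complex.exp_add, norm_smul,
    Real.norm_eq_abs, ← Complex.ofReal_pow, mul_pow, sq_abs]
  push_cast
  congr 1
  ring

lemma gaussianVec_conv_gaussianVec {d : ℕ} (μ₁ μ₂ : EuclideanSpace ℝ (Fin d)) (σ₁ σ₂ : ℝ) :
    gaussianVec μ₁ σ₁ ∗ gaussianVec μ₂ σ₂ = gaussianVec (μ₁ + μ₂) √(σ₁ ^ 2 + σ₂ ^ 2) := by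
  refine Measure.ext_of_charFun (funext fun t => ?_)
  rw [charFun_conv, charFun_gaussianVec, charFun_gaussianVec, charFun_gaussianVec,
    ← Complex.exp_add, inner_add_left, Real.sq_sqrt (by positivity)]
  push_cast
  congr 1
  ring

lemma gaussianVec_map_affine {d : ℕ} (μ a : EuclideanSpace ℝ (Fin d)) (c τ : ℝ) :
    (gaussianVec μ τ).map (fun x => a + c • x) = gaussianVec (a + c • μ) (c * τ) := by
  rw [gaussianVec, Measure.map_map (by fun_prop) (by fun_prop)]
  congr 1
  funext v
  simp only [Function.comp_apply, smul_add, smul_smul, add_assoc]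

lemma gaussianVec_eq_map_add {d : ℕ} (μ : EuclideanSpace ℝ (Fin d)) (τ : ℝ) :
    gaussianVec μ τ = (gaussianVec 0 τ).map (μ + ·) := by
  simpa using (gaussianVec_map_affine 0 μ 1 τ).symm

lemma bind_map_add_eq_map_conv {α G : Type*} [MeasurableSpace α] [MeasurableSpace G] [AddMonoid G]
    [MeasurableAdd₂ G] (μ : Measure α) (ν : Measure G) [SFinite ν] {m : α → G}
    (hm : Measurable m) :
    μ.bind (fun x => ν.map (m x + ·)) = μ.map m ∗ ν := by
  have hshift : Measurable fun y : G => ν.map (y + ·) := by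
    have h : (fun y : G => ν.map (y + ·))
        = fun y => (ν.map (Prod.mk y)).map (fun p => p.1 + p.2) := by
      funext y
      rw [Measure.map_map (by fun_prop) measurable_prodMk_left]
      rfl
    rw [h]
    exact (Measure.measurable_map _ (by fun_prop)).comp Measurable.map_prodMk_left
  have hκ : Measurable fun x => ν.map (m x + ·) := hshift.comp hm
  ext s hs
  have hsum : MeasurableSet ((fun p : G × G => p.1 + p.2) ⁻¹' s) := measurable_add hs
  rw [Measure.bind_apply hs hκ.aemeasurable, Measure.conv,
    Measure.map_apply measurable_add hs, Measure.prod_apply hsum,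
    lintegral_map (measurable_measure_prodMk_left hsum) hm]
  refine lintegral_congr fun x => ?_
  rw [Measure.map_apply (measurable_const_add _) hs]
  rfl

lemma gaussianVec_bind_reflect {d : ℕ} (x0 : EuclideanSpace ℝ (Fin d)) (c σ τ : ℝ) :
    (gaussianVec x0 τ).bind (fun x => gaussianVec (x0 + c • (x0 - x)) σ)
      = gaussianVec x0 √((c * τ) ^ 2 + σ ^ 2) := by
  have hreflect : (fun x : EuclideanSpace ℝ (Fin d) => x0 + c • (x0 - x))
      = fun x => (x0 + c • x0) + (-c) • x := by
    funext x
    rw [smul_sub, neg_smul, ← sub_eq_add_neg, add_sub_assoc]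
  have hshift : (fun x => gaussianVec (x0 + c • (x0 - x)) σ)
      = fun x => (gaussianVec 0 σ).map ((x0 + c • (x0 - x)) + ·) :=
    funext fun x => gaussianVec_eq_map_add _ σ
  rw [hshift, bind_map_add_eq_map_conv _ _ (by fun_prop), hreflect, gaussianVec_map_affine,
    gaussianVec_conv_gaussianVec, neg_smul, add_neg_cancel_right, add_zero, neg_mul, neg_sq]

lemma map_eq_gaussianVec_of_condDistrib {d : ℕ} {Ω : Type*} [MeasurableSpace Ω]
    {P : Measure Ω} [IsFiniteMeasure P] {X Y : Ω → EuclideanSpace ℝ (Fin d)}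
    (hX : AEMeasurable X P) (hY : AEMeasurable Y P) {x0 : EuclideanSpace ℝ (Fin d)}
    {c σ τ : ℝ} (hlaw : P.map X = gaussianVec x0 τ)
    (hcond : ∀ᵐ x ∂(P.map X), condDistrib Y X P x = gaussianVec (x0 + c • (x0 - x)) σ) :
    P.map Y = gaussianVec x0 √((c * τ) ^ 2 + σ ^ 2) := by
  rw [← condDistrib_comp_map hX hY, Measure.bind_congr_right hcond, hlaw]
  exact gaussianVec_bind_reflect x0 c σ τ

lemma sqrt_flip_variance {η ξ τ τ' : ℝ} (hη : η ^ 2 ≤ 1) (hξ : ξ ^ 2 = 1) (hτ : τ ≠ 0)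
    (hτ' : 0 ≤ τ') :
    √((ξ * √(1 - η ^ 2) * τ' / τ * τ) ^ 2 + (η * τ') ^ 2) = τ' := by
  rw [div_mul_cancel₀ _ hτ, mul_pow, mul_pow, hξ, Real.sq_sqrt (by linarith), one_mul,
    mul_pow, ← add_mul, sub_add_cancel, one_mul, Real.sqrt_sq hτ']

theorem ddim_flip_marginal_chain_general (d N : ℕ) (η ξ : ℝ)
    (hη : η ∈ Set.Icc (0:ℝ) 1) (hξ : ξ = 1 ∨ ξ = -1)
    (τ : ℕ → ℝ)
    (hτpos : ∀ n, 1 ≤ n → n ≤ N → 0 < τ n)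
    {Ω : Type*} [MeasurableSpace Ω] (P : Measure Ω) [IsProbabilityMeasure P]
    (x0 : EuclideanSpace ℝ (Fin d))
    (X : ℕ → Ω → EuclideanSpace ℝ (Fin d))
    (hX : ∀ n, Measurable (X n))
    (hXN : P.map (X N) = gaussianVec x0 (τ N))
    (hcond : ∀ n, 2 ≤ n → n ≤ N →
      ∀ᵐ xn ∂(P.map (X n)),
        condDistrib (X (n - 1)) (X n) P xn
          = gaussianVec (x0 + (ξ * Real.sqrt (1 - η^2) * τ (n - 1) / τ n) • (x0 - xn))
              (η * τ (n - 1))) :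
    ∀ n, 1 ≤ n → n ≤ N → P.map (X n) = gaussianVec x0 (τ n) := by
  have hη2 : η ^ 2 ≤ 1 := pow_le_one₀ hη.1 hη.2
  have hξ2 : ξ ^ 2 = 1 := by rcases hξ with rfl | rfl <;> norm_num
  intro n hn hnN
  refine Nat.decreasingInduction' (P := fun k => P.map (X k) = gaussianVec x0 (τ k))
    (fun k hkN hnk ih => ?_) hnN hXN
  have hlaw := map_eq_gaussianVec_of_condDistrib (hX (k + 1)).aemeasurable
    (hX (k + 1 - 1)).aemeasurable ih (hcond (k + 1) (by omega) hkN)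
  rwa [sqrt_flip_variance hη2 hξ2 (hτpos (k + 1) (by omega) hkN).ne'
    (hτpos (k + 1 - 1) (by omega) (by omega)).le, Nat.add_sub_cancel] at hlaw

/-- Inductive version of Proposition 1: the whole reverse chain preserves the Gaussian marginals. -/
theorem ddim_flip_marginal_chain (d N : ℕ) (hN : 1 ≤ N) (η ξ : ℝ)
    (hη : η ∈ Set.Icc (0:ℝ) 1) (hξ : ξ = 1 ∨ ξ = -1)
    (τ : ℕ → ℝ)
    (hτpos : ∀ n, 1 ≤ n → n ≤ N → 0 < τ n)
    (hτmono : ∀ n, 1 ≤ n → n < N → τ n < τ (n + 1))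
    {Ω : Type*} [MeasurableSpace Ω] (P : Measure Ω) [IsProbabilityMeasure P]
    (x0 : EuclideanSpace ℝ (Fin d))
    (X : ℕ → Ω → EuclideanSpace ℝ (Fin d))
    (hX : ∀ n, Measurable (X n))
    (hXN : P.map (X N) = gaussianVec x0 (τ N))
    (hcond : ∀ n, 2 ≤ n → n ≤ N →
      ∀ᵐ xn ∂(P.map (X n)),
        condDistrib (X (n - 1)) (X n) P xn
          = gaussianVec (x0 + (ξ * Real.sqrt (1 - η^2) * τ (n - 1) / τ n) • (x0 - xn))
              (η * τ (n - 1))) :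
    ∀ n, 1 ≤ n → n ≤ N → P.map (X n) = gaussianVec x0 (τ n) :=
  ddim_flip_marginal_chain_general d N η ξ hη hξ τ hτpos P x0 X hX hXN hcond
end
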